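/- Let f ∈ L²(V, μ). If ∫_V f dμ = 0, then g = −f/σ is the unique element of L²(V, μ) satisfying L g = f and ∫_V g dμ = 0. Conversely, if there exists g ∈ L¹(V, μ) with L g = f μ-a.e., then ∫_V f dμ = 0. -/

import Mathlib

open MeasureTheory Metric

/-- The surface measure on the sphere of radius `r` centered at the origin of `ℝ^d`,
realized as the `(d-1)`-dimensional Hausdorff measure restricted to the sphere. -/
noncomputable def sphereMeasure (d : ℕ) (r : ℝ) :
    Measure (EuclideanSpace ℝ (Fin d)) :=
  (μH[(d : ℝ) - 1]).restrict (sphere (0 : EuclideanSpace ℝ (Fin d)) r)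

/-- The relaxation (turning) operator `L g = σ (M ∫ g dμ − g)` with `M = 1/μ(V)`. -/
noncomputable def relaxationOp (d : ℕ) (r : ℝ) (σ : ℝ)
    (g : EuclideanSpace ℝ (Fin d) → ℝ) : EuclideanSpace ℝ (Fin d) → ℝ :=
  fun v => σ * ((sphereMeasure d r Set.univ).toReal⁻¹ *
    (∫ w, g w ∂(sphereMeasure d r)) - g v)

/-! The heart of the matter is that `μ` is a finite measure, so that `M ∫ g dμ` is the mean
`⨍ g dμ`, `L g = σ (⨍ g dμ - g)` and `∫ L g dμ = 0` for integrable `g`; on mean-zero `g`, `L` is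
just multiplication by `-σ`.

Finiteness: by Parseval, every point of the sphere of radius `r` in an `(n+1)`-dimensional space
has an orthonormal coordinate of absolute value at least `c = r / (n + 2)`, so the sphere is covered
by finitely many caps `{x | ‖x‖ = r ∧ c ≤ ⟪u, x⟫}`. On such a cap the orthogonal projection onto
`uᗮ` is antilipschitz, with image in a ball of the `n`-dimensional space `uᗮ`, whose `n`-dimensional
Hausdorff measure is a Haar measure. -/

open scoped RealInnerProductSpace

section
variable {E : Type*} [NormedAddCommGroup E] [InnerProductSpace ℝ E]

theorem norm_sq_eq_inner_sq_add_norm_sq_orthogonalProjectionOnto {u : E} (hu : ‖u‖ = 1)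
    (x : E) : ‖x‖ ^ 2 = ⟪u, x⟫ ^ 2 + ‖(ℝ ∙ u)ᗮ.orthogonalProjectionOnto x‖ ^ 2 := by
  rw [Submodule.norm_sq_eq_add_norm_sq_projection x (ℝ ∙ u)]
  congr 1
  rw [Submodule.coe_norm, ← Submodule.starProjection_apply,
    Submodule.starProjection_unit_singleton ℝ hu, norm_smul, hu, mul_one, Real.norm_eq_abs, sq_abs]

def sphericalCap (u : E) (r c : ℝ) : Set E := {x | ‖x‖ = r ∧ c ≤ ⟪u, x⟫}

theorem dist_le_mul_dist_orthogonalProjectionOnto_of_mem_sphericalCap {u : E} (hu : ‖u‖ = 1)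
    {r c : ℝ} (hc : 0 < c) {x y : E} (hx : x ∈ sphericalCap u r c) (hy : y ∈ sphericalCap u r c) :
    dist x y ≤ (1 + r / c) *
      dist ((ℝ ∙ u)ᗮ.orthogonalProjectionOnto x) ((ℝ ∙ u)ᗮ.orthogonalProjectionOnto y) := by
  have hx2 := norm_sq_eq_inner_sq_add_norm_sq_orthogonalProjectionOnto hu x
  have hy2 := norm_sq_eq_inner_sq_add_norm_sq_orthogonalProjectionOnto hu y
  have hxy2 := norm_sq_eq_inner_sq_add_norm_sq_orthogonalProjectionOnto hu (x - y)
  set P := (ℝ ∙ u)ᗮ.orthogonalProjectionOnto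
  obtain ⟨hxr, hcx⟩ := hx
  obtain ⟨hyr, hcy⟩ := hy
  have hr : 0 ≤ r := hxr ▸ norm_nonneg x
  have hpx : ‖P x‖ ≤ r := hxr ▸ Submodule.norm_orthogonalProjectionOnto_apply_le _ x
  have hpy : ‖P y‖ ≤ r := hyr ▸ Submodule.norm_orthogonalProjectionOnto_apply_le _ y
  rw [hxr] at hx2
  rw [hyr] at hy2
  rw [inner_sub_right, map_sub] at hxy2
  set a := ⟪u, x⟫
  set b := ⟪u, y⟫
  set δ := dist (P x) (P y)
  -- `a² - b² = ‖P y‖² - ‖P x‖²` because `‖x‖ = ‖y‖`, while `a + b ≥ 2c`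
  have hheight : |a - b| * (2 * c) ≤ δ * (2 * r) := by
    have hdiff : (a - b) * (a + b) = (‖P y‖ - ‖P x‖) * (‖P y‖ + ‖P x‖) := by nlinarith
    have hnorm : |‖P y‖ - ‖P x‖| ≤ δ := by
      simpa only [δ, dist_comm (P x), dist_eq_norm] using abs_norm_sub_norm_le (P y) (P x)
    calc |a - b| * (2 * c) ≤ |a - b| * |a + b| := by
          gcongr; rw [abs_of_pos (by linarith)]; linarith
      _ = |‖P y‖ - ‖P x‖| * (‖P y‖ + ‖P x‖) := by
          rw [← abs_mul, hdiff, abs_mul, abs_of_nonneg (by positivity : 0 ≤ ‖P y‖ + ‖P x‖)]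
      _ ≤ δ * (2 * r) := by gcongr; linarith
  have hab : |a - b| ≤ r / c * δ := by
    rw [div_mul_eq_mul_div, le_div_iff₀ hc]; linarith
  have hδ : ‖P x - P y‖ = δ := (dist_eq_norm _ _).symm
  rw [dist_eq_norm, ← sq_le_sq₀ (norm_nonneg _) (by positivity), hxy2, hδ]
  nlinarith [sq_abs (a - b), abs_nonneg (a - b), dist_nonneg (x := P x) (y := P y)]

theorem antilipschitzWith_orthogonalProjectionOnto_sphericalCap {u : E} (hu : ‖u‖ = 1)
    {r c : ℝ} (hc : 0 < c) :
    AntilipschitzWith (1 + r / c).toNNReal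
      (fun x : sphericalCap u r c ↦ (ℝ ∙ u)ᗮ.orthogonalProjectionOnto (x : E)) :=
  AntilipschitzWith.of_le_mul_dist fun x y ↦
    (dist_le_mul_dist_orthogonalProjectionOnto_of_mem_sphericalCap hu hc x.2 y.2).trans
      (by gcongr; exact Real.le_coe_toNNReal _)

theorem sphere_subset_iUnion_sphericalCap {ι : Type*} [Fintype ι] (b : OrthonormalBasis ι ℝ E)
    {r : ℝ} (hr : 0 < r) :
    sphere (0 : E) r ⊆ ⋃ i, (sphericalCap (b i) r (r / (Fintype.card ι + 1)) ∪
      sphericalCap (-b i) r (r / (Fintype.card ι + 1))) := by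
  intro x hx
  rw [mem_sphere_zero_iff_norm] at hx
  set c := r / (Fintype.card ι + 1)
  -- pigeonhole on Parseval's identity `∑ i, ⟪b i, x⟫ ^ 2 = r ^ 2`
  obtain ⟨i, hi⟩ : ∃ i, c ≤ |⟪b i, x⟫| := by
    by_contra! h
    have hsum : ∑ i, ⟪b i, x⟫ ^ 2 ≤ ∑ _i : ι, c ^ 2 :=
      Finset.sum_le_sum fun i _ ↦ sq_le_sq' (abs_lt.1 (h i)).1.le (abs_lt.1 (h i)).2.le
    rw [b.sum_sq_inner_right, hx, Finset.sum_const, Finset.card_univ, nsmul_eq_mul] at hsum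
    have hN : (Fintype.card ι : ℝ) < (Fintype.card ι + 1) ^ 2 := by nlinarith
    have : (Fintype.card ι : ℝ) * c ^ 2 < r ^ 2 := by
      rw [div_pow, mul_div_assoc', div_lt_iff₀ (by positivity)]
      nlinarith [mul_lt_mul_of_pos_left hN (pow_pos hr 2)]
    linarith
  refine Set.mem_iUnion.2 ⟨i, ?_⟩
  rcases le_abs'.1 hi with hneg | hpos
  · exact Or.inr ⟨hx, by rw [inner_neg_left]; linarith⟩
  · exact Or.inl ⟨hx, hpos⟩

variable [FiniteDimensional ℝ E] [MeasurableSpace E] [BorelSpace E]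

theorem hausdorffMeasure_sphericalCap_lt_top {n : ℕ} (hn : Module.finrank ℝ E = n + 1)
    {u : E} (hu : ‖u‖ = 1) (r : ℝ) {c : ℝ} (hc : 0 < c) :
    μH[n] (sphericalCap u r c) < ⊤ := by
  set P := (ℝ ∙ u)ᗮ.orthogonalProjectionOnto
  have : Fact (Module.finrank ℝ E = n + 1) := ⟨hn⟩
  have hK : Module.finrank ℝ (ℝ ∙ u)ᗮ = n :=
    Submodule.finrank_orthogonal_span_singleton (ne_zero_of_norm_ne_zero (hu ▸ one_ne_zero))
  have himage : (fun x : sphericalCap u r c ↦ P x) '' Set.univ ⊆ closedBall 0 r := by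
    rintro _ ⟨x, -, rfl⟩
    simpa [← x.2.1] using Submodule.norm_orthogonalProjectionOnto_apply_le _ (x : E)
  have hball : μH[n] (closedBall (0 : (ℝ ∙ u)ᗮ) r) < ⊤ := by
    have := isAddHaarMeasure_hausdorffMeasure (E := (ℝ ∙ u)ᗮ)
    rw [hK] at this
    exact (isCompact_closedBall _ _).measure_lt_top
  calc μH[n] (sphericalCap u r c)
      = μH[n] (Set.univ : Set (sphericalCap u r c)) := by
        simpa using (isometry_subtype_coe (s := sphericalCap u r c)).hausdorffMeasure_image
          (Or.inl n.cast_nonneg) Set.univ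
    _ ≤ ((1 + r / c).toNNReal : ENNReal) ^ (n : ℝ) * μH[n] (closedBall (0 : (ℝ ∙ u)ᗮ) r) :=
        ((antilipschitzWith_orthogonalProjectionOnto_sphericalCap hu hc).le_hausdorffMeasure_image
          n.cast_nonneg _).trans (by gcongr)
    _ < ⊤ := ENNReal.mul_lt_top (by simp) hball

theorem hausdorffMeasure_sphere_lt_top {n : ℕ} (hn : Module.finrank ℝ E = n + 1) (r : ℝ) :
    μH[n] (sphere (0 : E) r) < ⊤ := by
  rcases lt_trichotomy r 0 with hr | rfl | hr
  · simp [sphere_eq_empty_of_neg hr]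
  · rw [sphere_zero]
    exact (Measure.hausdorffMeasure_le_one_of_subsingleton Set.subsingleton_singleton
      n.cast_nonneg).trans_lt ENNReal.one_lt_top
  · set b := stdOrthonormalBasis ℝ E
    have hc : 0 < r / (Fintype.card (Fin (Module.finrank ℝ E)) + 1) := by positivity
    refine (measure_mono (sphere_subset_iUnion_sphericalCap b hr)).trans_lt ?_
    refine (measure_iUnion_fintype_le _ _).trans_lt (ENNReal.sum_lt_top.2 fun i _ ↦ ?_)
    exact measure_union_lt_top (hausdorffMeasure_sphericalCap_lt_top hn (b.norm_eq_one i) r hc)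
      (hausdorffMeasure_sphericalCap_lt_top hn (by rw [norm_neg, b.norm_eq_one]) r hc)

end

theorem isFiniteMeasure_sphereMeasure {d : ℕ} (hd : d ≠ 0) (r : ℝ) :
    IsFiniteMeasure (sphereMeasure d r) := by
  obtain ⟨n, rfl⟩ := Nat.exists_eq_succ_of_ne_zero hd
  refine ⟨?_⟩
  rw [sphereMeasure, Measure.restrict_apply_univ, Nat.cast_succ, add_sub_cancel_right]
  exact hausdorffMeasure_sphere_lt_top (finrank_euclideanSpace_fin) r

theorem relaxationOp_eq_average (d : ℕ) (r σ : ℝ) (g : EuclideanSpace ℝ (Fin d) → ℝ) :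
    relaxationOp d r σ g = fun v ↦ σ * (⨍ w, g w ∂sphereMeasure d r - g v) := by
  simp only [average_eq, measureReal_def, smul_eq_mul]
  rfl

theorem relaxationOp_of_integral_eq_zero {d : ℕ} {r : ℝ} (σ : ℝ)
    {g : EuclideanSpace ℝ (Fin d) → ℝ} (hg : ∫ v, g v ∂sphereMeasure d r = 0) :
    relaxationOp d r σ g = fun v ↦ -(σ * g v) := by
  funext v
  simp [relaxationOp, hg]

theorem integral_relaxationOp {d : ℕ} {r : ℝ} [IsFiniteMeasure (sphereMeasure d r)] (σ : ℝ)
    {g : EuclideanSpace ℝ (Fin d) → ℝ} (hg : Integrable g (sphereMeasure d r)) :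
    ∫ v, relaxationOp d r σ g v ∂sphereMeasure d r = 0 := by
  rw [relaxationOp_eq_average, integral_const_mul, integral_average_sub hg, mul_zero]

theorem relaxation_solvability_general (d : ℕ) (hd : 2 ≤ d) (r : ℝ)
    (σ : ℝ) (hσ : 0 < σ) (f : EuclideanSpace ℝ (Fin d) → ℝ)
    (hf : MemLp f 2 (sphereMeasure d r)) :
    ((∫ v, f v ∂(sphereMeasure d r)) = 0 →
      relaxationOp d r σ (fun v => -f v / σ) = f ∧
      (∫ v, -f v / σ ∂(sphereMeasure d r)) = 0 ∧
      MemLp (fun v => -f v / σ) 2 (sphereMeasure d r) ∧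
      ∀ g : EuclideanSpace ℝ (Fin d) → ℝ, MemLp g 2 (sphereMeasure d r) →
        relaxationOp d r σ g =ᵐ[sphereMeasure d r] f →
        (∫ v, g v ∂(sphereMeasure d r)) = 0 →
        g =ᵐ[sphereMeasure d r] fun v => -f v / σ) ∧
    (∀ g : EuclideanSpace ℝ (Fin d) → ℝ, Integrable g (sphereMeasure d r) →
      relaxationOp d r σ g =ᵐ[sphereMeasure d r] f →
      (∫ v, f v ∂(sphereMeasure d r)) = 0) := by
  have := isFiniteMeasure_sphereMeasure (by omega : d ≠ 0) r
  have hσ0 : σ ≠ 0 := hσ.ne'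
  refine ⟨fun hf0 ↦ ?_, fun g hg hLg ↦ ?_⟩
  · have hmean : ∫ v, -f v / σ ∂sphereMeasure d r = 0 := by
      rw [integral_div, integral_neg, hf0, neg_zero, zero_div]
    have hmem : MemLp (fun v ↦ -f v / σ) 2 (sphereMeasure d r) := by
      simpa only [Pi.neg_apply, div_eq_mul_inv] using hf.neg.mul_const σ⁻¹
    refine ⟨?_, hmean, hmem, fun g _ hLg hg0 ↦ ?_⟩
    · rw [relaxationOp_of_integral_eq_zero σ hmean]
      funext v
      field_simp
    · filter_upwards [hLg] with v hv
      rw [relaxationOp_of_integral_eq_zero σ hg0] at hv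
      rw [← hv]
      field_simp
  · rw [← integral_congr_ae hLg, integral_relaxationOp σ hg]

/-- if `∫ f dμ = 0` then `g = −f/σ` is the unique mean-zero `L²` solution of
`L g = f`; conversely, if `L g = f` a.e. for some `g ∈ L¹`, then `∫ f dμ = 0`. -/
theorem relaxation_solvability (d : ℕ) (hd : 2 ≤ d) (r : ℝ) (hr : 0 < r)
    (σ : ℝ) (hσ : 0 < σ) (f : EuclideanSpace ℝ (Fin d) → ℝ)
    (hf : MemLp f 2 (sphereMeasure d r)) :
    ((∫ v, f v ∂(sphereMeasure d r)) = 0 →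
      relaxationOp d r σ (fun v => -f v / σ) = f ∧
      (∫ v, -f v / σ ∂(sphereMeasure d r)) = 0 ∧
      MemLp (fun v => -f v / σ) 2 (sphereMeasure d r) ∧
      ∀ g : EuclideanSpace ℝ (Fin d) → ℝ, MemLp g 2 (sphereMeasure d r) →
        relaxationOp d r σ g =ᵐ[sphereMeasure d r] f →
        (∫ v, g v ∂(sphereMeasure d r)) = 0 →
        g =ᵐ[sphereMeasure d r] fun v => -f v / σ) ∧
    (∀ g : EuclideanSpace ℝ (Fin d) → ℝ, Integrable g (sphereMeasure d r) →
      relaxationOp d r σ g =ᵐ[sphereMeasure d r] f →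
      (∫ v, f v ∂(sphereMeasure d r)) = 0) :=
  relaxation_solvability_general d hd r σ hσ f hf
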